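/- arXiv:1101.2682 — 6 statements merged into one kernel-verified Lean document; each statement's English description precedes it below -/
import Mathlib

section
/- For nonzero complex numbers ξ₁,…,ξ_N and parameters p,q with p+q=1, the sum over k from 1 to N of ∏_{j=1}^N (p + q ξ_k ξ_j - ξ_k) · 1/(ξ_k (p - q ξ_k)) · 1/∏_{j≠k} (ξ_j - ξ_k) equals p^{N-1}/∏_j ξ_j - p^{N-1}, provided all ξ_k are distinct and the expressions are defined (ξ_k ≠ 0, p - qξ_k ≠ 0). -/
/-!
Since `p + q = 1`, `f(x, η) = -p (x - η) + (p - q x) (1 - η)`. Expanding `∏ⱼ f(x, ξⱼ)` in order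
gives `(-p) ^ N ∏ⱼ (x - ξⱼ) + (p - q x) Q(x)` with `deg Q < N`. At `x = ξₖ` the first term
vanishes and `p - q ξₖ` cancels, so the sum is `∑ₖ Q(ξₖ) / (ξₖ ∏_{j ≠ k} (ξⱼ - ξₖ))`. By the
barycentric form of Lagrange interpolation at the extra point `0` this is `Q(0) / ∏ⱼ ξⱼ`, and a
telescoping sum gives `Q(0) = p ^ (N - 1) (1 - ∏ⱼ ξⱼ)`.
-/

open Finset Polynomial

theorem Lagrange.eval_div_prod_sub_eq_sum {F ι : Type*} [Field F] [Fintype ι] [DecidableEq ι]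
    {ξ : ι → F} (hξ : Function.Injective ξ) {Q : F[X]} (hQ : Q.degree < Fintype.card ι)
    {x : F} (hx : ∀ i, ξ i ≠ x) :
    Q.eval x / ∏ j, (ξ j - x) =
      ∑ i, Q.eval (ξ i) / ((ξ i - x) * ∏ j ∈ univ.erase i, (ξ j - ξ i)) := by
  have prod_sub_swap (s : Finset ι) (y : F) :
      ∏ j ∈ s, (ξ j - y) = (-1) ^ #s * ∏ j ∈ s, (y - ξ j) := by
    rw [← prod_neg]; simp only [neg_sub]
  have hbary := eval_interpolate_not_at_node (s := univ) (v := ξ) (fun i => Q.eval (ξ i))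
    (x := x) fun i _ => (hx i).symm
  rw [← eq_interpolate hξ.injOn (by simpa using hQ), eval_nodal] at hbary
  have hnodal : ∏ j, (x - ξ j) ≠ 0 := prod_ne_zero_iff.mpr fun j _ => sub_ne_zero.mpr (hx j).symm
  rw [hbary, prod_sub_swap, mul_sum, sum_div]
  refine sum_congr rfl fun i _ => ?_
  have hweight : ∏ j ∈ univ.erase i, (ξ i - ξ j) ≠ 0 := prod_ne_zero_iff.mpr fun j hj =>
    sub_ne_zero.mpr <| hξ.ne (ne_of_mem_erase hj).symm
  have hxi : x - ξ i ≠ 0 := sub_ne_zero.mpr (hx i).symm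
  have hix : ξ i - x ≠ 0 := sub_ne_zero.mpr (hx i)
  rw [prod_sub_swap, ← card_erase_add_one (mem_univ i), nodalWeight, prod_inv_distrib]
  field_simp
  ring

theorem Fin.card_filter_lt_add_card_filter_gt {n : ℕ} (i : Fin n) :
    #{j | j < i} + #{j | i < j} = n - 1 := by
  rw [filter_gt_eq_Iio, filter_lt_eq_Ioi, Fin.card_Iio, Fin.card_Ioi]
  omega

theorem Finset.one_sub_prod_eq_sum {ι R : Type*} [LinearOrder ι] [CommRing R] (s : Finset ι)
    (f : ι → R) : 1 - ∏ i ∈ s, f i = ∑ i ∈ s, (1 - f i) * ∏ j ∈ s with i < j, f j := by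
  have h := prod_add_ordered s f (fun i => 1 - f i)
  simp only [add_sub_cancel, prod_const_one, mul_one] at h
  linear_combination h

section Asep

variable {R : Type*} [CommRing R] {n : ℕ} (p q : R) (ξ : Fin n → R)

noncomputable def asepQuotient : R[X] :=
  ∑ i, C (1 - ξ i) * (∏ j ∈ {j | j < i}, (C p + C q * X * C (ξ j) - X)) *
    ∏ j ∈ {j | i < j}, C (-p) * (X - C (ξ j))

variable {p q}

theorem prod_eq_prod_add_mul_eval_asepQuotient (hpq : p + q = 1) (x : R) :
    ∏ j, (p + q * x * ξ j - x) =
      ∏ j, (-p * (x - ξ j)) + (p - q * x) * (asepQuotient p q ξ).eval x := by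
  have hsplit : ∀ j, p + q * x * ξ j - x = -p * (x - ξ j) + (p - q * x) * (1 - ξ j) := fun j => by
    linear_combination x * hpq
  rw [prod_congr rfl fun j _ => hsplit j, prod_add_ordered]
  simp only [asepQuotient, eval_finsetSum, eval_mul, eval_prod, eval_C, eval_add, eval_X, eval_sub,
    mul_sum]
  congr 1
  refine sum_congr rfl fun i _ => ?_
  rw [prod_congr rfl fun j _ => (hsplit j).symm]
  ring

theorem prod_eq_mul_eval_asepQuotient (hpq : p + q = 1) (k : Fin n) :
    ∏ j, (p + q * ξ k * ξ j - ξ k) = (p - q * ξ k) * (asepQuotient p q ξ).eval (ξ k) := by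
  rw [prod_eq_prod_add_mul_eval_asepQuotient ξ hpq, prod_eq_zero (mem_univ k) (by ring), zero_add]

variable (p q)

theorem degree_asepQuotient_lt : (asepQuotient p q ξ).degree < n := by
  have natDegree_prod_le_card {s : Finset (Fin n)} {f : Fin n → R[X]}
      (hf : ∀ j, (f j).natDegree ≤ 1) : (∏ j ∈ s, f j).natDegree ≤ #s :=
    (natDegree_prod_le _ _).trans <| (sum_le_sum fun j _ => hf j).trans (by simp)
  refine (degree_sum_le _ _).trans_lt <|
    (Finset.sup_lt_iff (WithBot.bot_lt_coe n)).mpr fun i _ => ?_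
  refine degree_le_natDegree.trans_lt <| WithBot.coe_lt_coe.mpr ?_
  calc _ ≤ #{j | j < i} + #{j | i < j} :=
        natDegree_mul_le.trans <| add_le_add
          ((natDegree_C_mul_le _ _).trans (natDegree_prod_le_card fun j => by compute_degree))
          (natDegree_prod_le_card fun j => by compute_degree)
    _ < n := by rw [Fin.card_filter_lt_add_card_filter_gt]; have := i.pos; omega

theorem eval_zero_asepQuotient :
    (asepQuotient p q ξ).eval 0 = p ^ (n - 1) * (1 - ∏ j, ξ j) := by
  simp only [asepQuotient, eval_finsetSum, eval_mul, eval_prod, eval_C, eval_add, eval_X,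
    eval_sub, mul_zero, zero_mul, add_zero, sub_zero, zero_sub, neg_mul_neg, one_sub_prod_eq_sum,
    mul_sum]
  refine sum_congr rfl fun i _ => ?_
  rw [prod_const, prod_mul_distrib, prod_const, ← Fin.card_filter_lt_add_card_filter_gt i, pow_add]
  ring

end Asep

theorem asep_simpler_identity_general (N : ℕ) (p q : ℂ) (hpq : p + q = 1)
    (ξ : Fin N → ℂ) (hinj : Function.Injective ξ)
    (h0 : ∀ k, ξ k ≠ 0) (hpole : ∀ k, p - q * ξ k ≠ 0) :
    ∑ k : Fin N,
        (∏ j : Fin N, (p + q * ξ k * ξ j - ξ k)) *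
          (ξ k * (p - q * ξ k))⁻¹ *
          (∏ j ∈ Finset.univ.erase k, (ξ j - ξ k))⁻¹
      = p ^ (N - 1) / (∏ j : Fin N, ξ j) - p ^ (N - 1) := by
  have hterm : ∀ k, (∏ j, (p + q * ξ k * ξ j - ξ k)) * (ξ k * (p - q * ξ k))⁻¹ *
      (∏ j ∈ univ.erase k, (ξ j - ξ k))⁻¹ =
      (asepQuotient p q ξ).eval (ξ k) / ((ξ k - 0) * ∏ j ∈ univ.erase k, (ξ j - ξ k)) := by
    intro k
    rw [prod_eq_mul_eval_asepQuotient ξ hpq, sub_zero]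
    field_simp [hpole k]
  rw [sum_congr rfl fun k _ => hterm k, ← Lagrange.eval_div_prod_sub_eq_sum hinj
    (by simpa using degree_asepQuotient_lt p q ξ) h0, eval_zero_asepQuotient]
  have hprod : ∏ j, ξ j ≠ 0 := prod_ne_zero_iff.mpr fun j _ => h0 j
  simp only [sub_zero]
  field_simp

/-- Residue identity (simpler identity used for the left-most particle formula):
for distinct nonzero complex ξ's avoiding poles,
∑_k ∏_j f(ξ_k,ξ_j) · [ξ_k(p−qξ_k)]⁻¹ · ∏_{j≠k}(ξ_j−ξ_k)⁻¹ = p^{N−1}(∏ ξ_j⁻¹ − 1). -/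
theorem asep_simpler_identity (N : ℕ) (hN : 1 ≤ N) (p q : ℂ) (hpq : p + q = 1)
    (ξ : Fin N → ℂ) (hinj : Function.Injective ξ)
    (h0 : ∀ k, ξ k ≠ 0) (hpole : ∀ k, p - q * ξ k ≠ 0) :
    ∑ k : Fin N,
        (∏ j : Fin N, (p + q * ξ k * ξ j - ξ k)) *
          (ξ k * (p - q * ξ k))⁻¹ *
          (∏ j ∈ Finset.univ.erase k, (ξ j - ξ k))⁻¹
      = p ^ (N - 1) / (∏ j : Fin N, ξ j) - p ^ (N - 1) :=
  asep_simpler_identity_general N p q hpq ξ hinj h0 hpole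
end

section
/- Let p + q = 1 and define the change of variables ξ_i = (1 − τη_i)/(1 − η_i) with τ = p/q. Then ∏_{i≠j} (ξ_j − ξ_i)/(p + qξ_iξ_j − ξ_i) = (1+τ)^{k(k−1)} ∏_{i≠j} (η_i − η_j)/(τη_i − η_j), whenever all expressions are defined. -/
/-!
Write `ξ(x) = (1 - τ x) / (1 - x)`. Clearing the denominators `(1 - a)(1 - b)`, and using
`p = q τ` and `1 = q (1 + τ)`, one finds
`ξ(b) - ξ(a) = (1 - τ)(b - a) / ((1 - a)(1 - b))` and
`p + q ξ(a) ξ(b) - ξ(a) = q (1 - τ)(b - τ a) / ((1 - a)(1 - b))`.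
The common factor `1 - τ` is nonzero because the denominator is, so each factor on the left equals
`(1 + τ)(a - b)/(τ a - b)`, and there are `k(k - 1)` factors.
-/

open Finset

section ChangeOfVariables

variable {K : Type*} [Field K]

theorem moebius_sub_moebius (τ a b : K) (ha : a ≠ 1) (hb : b ≠ 1) :
    (1 - τ * b) / (1 - b) - (1 - τ * a) / (1 - a) = (1 - τ) * (b - a) / ((1 - a) * (1 - b)) := by
  have ha' : 1 - a ≠ 0 := sub_ne_zero.mpr ha.symm
  have hb' : 1 - b ≠ 0 := sub_ne_zero.mpr hb.symm
  field_simp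
  ring

theorem asep_denominator_eq {q τ : K} (hq : q * (1 + τ) = 1) (a b : K) (ha : a ≠ 1)
    (hb : b ≠ 1) :
    q * τ + q * ((1 - τ * a) / (1 - a)) * ((1 - τ * b) / (1 - b)) - (1 - τ * a) / (1 - a)
      = q * (1 - τ) * (b - τ * a) / ((1 - a) * (1 - b)) := by
  have ha' : 1 - a ≠ 0 := sub_ne_zero.mpr ha.symm
  have hb' : 1 - b ≠ 0 := sub_ne_zero.mpr hb.symm
  field_simp
  linear_combination (1 - τ * a) * (1 - b) * hq

theorem asep_factor_eq {q τ : K} (hq : q * (1 + τ) = 1) {a b : K} (ha : a ≠ 1) (hb : b ≠ 1)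
    (hden : q * τ + q * ((1 - τ * a) / (1 - a)) * ((1 - τ * b) / (1 - b))
      - (1 - τ * a) / (1 - a) ≠ 0) :
    ((1 - τ * b) / (1 - b) - (1 - τ * a) / (1 - a))
        / (q * τ + q * ((1 - τ * a) / (1 - a)) * ((1 - τ * b) / (1 - b)) - (1 - τ * a) / (1 - a))
      = (1 + τ) * ((a - b) / (τ * a - b)) := by
  rw [asep_denominator_eq hq a b ha hb] at hden ⊢
  rw [moebius_sub_moebius τ a b ha hb]
  obtain ⟨hqτ, hba⟩ : q * (1 - τ) ≠ 0 ∧ b - τ * a ≠ 0 := by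
    simpa only [div_ne_zero_iff, mul_ne_zero_iff] using (div_ne_zero_iff.mp hden).1
  have hq0 : q ≠ 0 := left_ne_zero_of_mul hqτ
  have hτ1 : 1 - τ ≠ 0 := right_ne_zero_of_mul hqτ
  have hab : τ * a - b ≠ 0 := by rwa [← neg_sub, neg_ne_zero]
  field_simp
  linear_combination (b - a) * (b - τ * a) * hq

end ChangeOfVariables

theorem Fin.card_univ_offDiag (k : ℕ) :
    #(univ : Finset (Fin k)).offDiag = k * (k - 1) := by
  rw [offDiag_card, card_univ, Fintype.card_fin, Nat.mul_sub_one]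

theorem asep_change_of_variables_general (k : ℕ) (p q τ : ℂ) (hpq : p + q = 1) (hq : q ≠ 0)
    (hτ : τ = p / q) (η : Fin k → ℂ) (hη1 : ∀ i, η i ≠ 1)
    (ξ : Fin k → ℂ) (hξ : ∀ i, ξ i = (1 - τ * η i) / (1 - η i))
    (hf : ∀ i j : Fin k, i ≠ j → p + q * ξ i * ξ j - ξ i ≠ 0) :
    ∏ ij ∈ Finset.univ.offDiag,
        ((ξ (ij : Fin k × Fin k).2 - ξ ij.1) / (p + q * ξ ij.1 * ξ ij.2 - ξ ij.1))
      = (1 + τ) ^ (k * (k - 1)) *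
          ∏ ij ∈ Finset.univ.offDiag,
            ((η (ij : Fin k × Fin k).1 - η ij.2) / (τ * η ij.1 - η ij.2)) := by
  have hp : p = q * τ := by rw [hτ, mul_div_cancel₀ _ hq]
  have hq1 : q * (1 + τ) = 1 := by rw [mul_add, mul_one, ← hp, add_comm, hpq]
  obtain rfl : ξ = fun i => (1 - τ * η i) / (1 - η i) := funext hξ
  subst hp
  have hfactor : ∀ ij ∈ (univ : Finset (Fin k)).offDiag,
      ((1 - τ * η ij.2) / (1 - η ij.2) - (1 - τ * η ij.1) / (1 - η ij.1))
          / (q * τ + q * ((1 - τ * η ij.1) / (1 - η ij.1)) * ((1 - τ * η ij.2) / (1 - η ij.2))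
            - (1 - τ * η ij.1) / (1 - η ij.1))
        = (1 + τ) * ((η ij.1 - η ij.2) / (τ * η ij.1 - η ij.2)) := fun ij hij =>
    asep_factor_eq hq1 (hη1 _) (hη1 _) (hf _ _ (mem_offDiag.mp hij).2.2)
  rw [prod_congr rfl hfactor, prod_mul_distrib, prod_const, Fin.card_univ_offDiag]

/-- Under the change of variables ξ_i = (1 − τη_i)/(1 − η_i), τ = p/q, p + q = 1:
∏_{i≠j} (ξ_j − ξ_i)/(p + qξ_iξ_j − ξ_i) = (1+τ)^{k(k−1)} ∏_{i≠j} (η_i − η_j)/(τη_i − η_j). -/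
theorem asep_change_of_variables (k : ℕ) (p q τ : ℂ) (hpq : p + q = 1) (hq : q ≠ 0)
    (hτ : τ = p / q) (η : Fin k → ℂ) (hη1 : ∀ i, η i ≠ 1)
    (hinj : Function.Injective η) (hcross : ∀ i j, τ * η i ≠ η j)
    (ξ : Fin k → ℂ) (hξ : ∀ i, ξ i = (1 - τ * η i) / (1 - η i))
    (hf : ∀ i j : Fin k, i ≠ j → p + q * ξ i * ξ j - ξ i ≠ 0) :
    ∏ ij ∈ Finset.univ.offDiag,
        ((ξ (ij : Fin k × Fin k).2 - ξ ij.1) / (p + q * ξ ij.1 * ξ ij.2 - ξ ij.1))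
      = (1 + τ) ^ (k * (k - 1)) *
          ∏ ij ∈ Finset.univ.offDiag,
            ((η (ij : Fin k × Fin k).1 - η ij.2) / (τ * η ij.1 - η ij.2)) :=
  asep_change_of_variables_general k p q τ hpq hq hτ η hη1 ξ hξ hf
end

section
/- Combining the Cauchy determinant with the substitution: for p+q=1, q≠0, distinct ξ₁,…,ξ_k avoiding poles, ∏_{i≠j} (ξ_j − ξ_i)/(p + qξ_iξ_j − ξ_i) = (−1)^k (pq)^{−k(k−1)/2} ∏_i (1 − ξ_i)(qξ_i − p) · det(1/(p + qξ_iξ_j − ξ_i))_{1≤i,j≤k}. -/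
/-!
With `a j = q ξ j - 1` the entries are `1 / (a j ξ i + p)`, so the matrix is of Cauchy type
`(a j x i + b j)⁻¹`. Multiplying row `i` by `∏ l, (a l x i + b l)` turns entry `(i, j)` into
`∏ l ≠ j, (a l x i + b l)`, a polynomial of degree `< n` in `x i`; hence that matrix is
`vandermonde x * C`, with `C` the matrix of coefficients. Evaluating the homogenised polynomials
at the zeros `(-b m, a m)` of the linear forms instead gives a diagonal matrix, so multiplying `C`
by a projective Vandermonde matrix computes `det C = ∏ i < j, (a i b j - a j b i)`.
Here `a i b j - a j b i = p q (ξ i - ξ j)`, which produces the factor `(p q) ^ (k (k - 1) / 2)`,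
while the diagonal `p + q ξ i ^ 2 - ξ i = (ξ i - 1) (q ξ i - p)` (using `p + q = 1`) produces
the prefactor `∏ i, (1 - ξ i) (q ξ i - p)`.
-/

open Finset Matrix Polynomial

lemma Finset.prod_univ_offDiag {α M : Type*} [Fintype α] [DecidableEq α] [CommMonoid M]
    (f : α × α → M) : ∏ x ∈ univ.offDiag, f x = ∏ i, ∏ j ∈ {i}ᶜ, f (i, j) :=
  prod_finset_product _ _ _ fun x => by simp [eq_comm]

lemma Fintype.prod_prod_eq_prod_diag_mul_prod_compl {α M : Type*} [Fintype α] [DecidableEq α]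
    [CommMonoid M] (f : α → α → M) :
    ∏ i, ∏ j, f i j = (∏ i, f i i) * ∏ i, ∏ j ∈ {i}ᶜ, f i j := by
  rw [← prod_mul_distrib]
  exact Finset.prod_congr rfl fun i _ => prod_eq_mul_prod_compl i _

lemma Fin.prod_prod_Ioi_const {M : Type*} [CommMonoid M] (n : ℕ) (c : M) :
    ∏ i : Fin n, ∏ _j ∈ Ioi i, c = c ^ (n * (n - 1) / 2) := by
  simp only [Finset.prod_const, prod_pow_eq_pow_sum, Fin.card_Ioi]
  rw [Fin.sum_univ_eq_sum_range (fun i => n - 1 - i) n, sum_range_reflect (fun i => i) n,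
    sum_range_id]

namespace Polynomial

variable {R : Type*} [CommSemiring R]

lemma eval_homogenize_eq_sum (p : R[X]) (n : ℕ) (t u : R) :
    MvPolynomial.eval ![t, u] (p.homogenize n) =
      ∑ d ∈ range (n + 1), p.coeff d * t ^ d * u ^ (n - d) := by
  simp only [homogenize, map_sum, MvPolynomial.eval_monomial,
    Nat.sum_antidiagonal_eq_sum_range_succ_mk]
  refine sum_congr rfl fun d _ => ?_
  rw [Finsupp.prod_fintype _ _ (by simp)]
  simp [mul_assoc]

lemma eval_homogenize_prod_linear {ι : Type*} (s : Finset ι) (a b : ι → R) (t u : R) :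
    MvPolynomial.eval ![t, u] ((∏ l ∈ s, (C (a l) * X + C (b l))).homogenize #s) =
      ∏ l ∈ s, (a l * t + b l * u) := by
  rw [card_eq_sum_ones, homogenize_finsetProd fun l _ => natDegree_linear_le]
  simp only [map_prod, homogenize_add, homogenize_C_mul, homogenize_X one_ne_zero, homogenize_C]
  simp

end Polynomial

namespace Matrix

variable {n : ℕ}

section CommRing

variable {R : Type*} [CommRing R]

noncomputable def cofactorCoeffMatrix (a b : Fin n → R) : Matrix (Fin n) (Fin n) R :=
  of fun d j => (∏ l ∈ {j}ᶜ, (C (a l) * X + C (b l))).coeff d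

lemma projVandermonde_mul_cofactorCoeffMatrix (v w a b : Fin n → R) :
    projVandermonde v w * cofactorCoeffMatrix a b =
      of fun i j => ∏ l ∈ {j}ᶜ, (a l * v i + b l * w i) := by
  ext i j
  have hcard : #({j}ᶜ : Finset (Fin n)) = n - 1 := by rw [card_compl]; simp
  rw [of_apply, ← eval_homogenize_prod_linear, eval_homogenize_eq_sum, hcard,
    Nat.sub_add_cancel j.pos, ← Fin.sum_univ_eq_sum_range, mul_apply]
  refine sum_congr rfl fun d _ => ?_
  rw [projVandermonde_apply, cofactorCoeffMatrix, of_apply, Fin.val_rev,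
    show n - (d + 1) = n - 1 - d by omega]
  ring

lemma det_cofactorCoeffMatrix [IsDomain R] {a b : Fin n → R}
    (hab : Pairwise fun i j => a i * b j ≠ a j * b i) :
    det (cofactorCoeffMatrix a b) = ∏ i, ∏ j ∈ Ioi i, (a i * b j - a j * b i) := by
  have hdiag : projVandermonde (-b) a * cofactorCoeffMatrix a b =
      diagonal fun j => ∏ l ∈ {j}ᶜ, (a j * b l - a l * b j) := by
    rw [projVandermonde_mul_cofactorCoeffMatrix]
    ext i j
    rcases eq_or_ne i j with rfl | hij
    · rw [of_apply, diagonal_apply_eq]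
      exact prod_congr rfl fun l _ => by simp only [Pi.neg_apply]; ring
    · rw [of_apply, diagonal_apply_ne _ hij]
      exact prod_eq_zero (i := i) (by simpa using hij) (by simp only [Pi.neg_apply]; ring)
  have hW : det (projVandermonde (-b) a) = ∏ i, ∏ j ∈ Ioi i, (a j * b i - a i * b j) := by
    rw [det_projVandermonde]
    exact prod_congr rfl fun i _ => prod_congr rfl fun j _ => by simp only [Pi.neg_apply]; ring
  have hW0 : det (projVandermonde (-b) a) ≠ 0 := by
    rw [hW]
    exact prod_ne_zero_iff.2 fun i _ => prod_ne_zero_iff.2 fun j hj =>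
      sub_ne_zero.2 (hab (mem_Ioi.1 hj).ne')
  apply mul_left_cancel₀ hW0
  rw [← det_mul, hdiag, det_diagonal,
    ← prod_prod_Ioi_mul_eq_prod_prod_off_diag fun l j => a j * b l - a l * b j, hW]
  simp only [prod_mul_distrib]
  exact mul_comm _ _

end CommRing

theorem det_cauchy {K : Type*} [Field K] (x a b : Fin n → K)
    (hab : Pairwise fun i j => a i * b j ≠ a j * b i) (hF : ∀ i j, a j * x i + b j ≠ 0) :
    det (of fun i j => (a j * x i + b j)⁻¹) =
      (∏ i, ∏ j ∈ Ioi i, (x j - x i) * (a i * b j - a j * b i)) / ∏ i, ∏ j, (a j * x i + b j) := by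
  have hrow : of (fun i j => (a j * x i + b j)⁻¹) = of fun i j =>
      (∏ l, (a l * x i + b l))⁻¹ * (vandermonde x * cofactorCoeffMatrix a b) i j := by
    ext i j
    rw [vandermonde_eq_projVandermonde, projVandermonde_mul_cofactorCoeffMatrix]
    simp only [of_apply, Pi.one_apply, mul_one]
    rw [Fintype.prod_eq_mul_prod_compl j, mul_inv, mul_assoc,
      inv_mul_cancel₀ (prod_ne_zero_iff.2 fun l _ => hF i l), mul_one]
  rw [hrow, det_mul_column, det_mul, det_vandermonde, det_cofactorCoeffMatrix hab,
    prod_inv_distrib]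
  simp only [prod_mul_distrib, div_eq_inv_mul]

end Matrix

/-- The ASEP interaction product as a determinant:
∏_{i≠j} (ξ_j − ξ_i)/f(ξ_i,ξ_j)
= (−1)^k (pq)^{−k(k−1)/2} ∏_i (1 − ξ_i)(qξ_i − p) · det(1/f(ξ_i,ξ_j)),
where f(ξ,ξ') = p + qξξ' − ξ. -/
theorem asep_product_determinant (k : ℕ) (p q : ℂ) (hpq : p + q = 1)
    (hpq0 : p * q ≠ 0) (ξ : Fin k → ℂ) (hinj : Function.Injective ξ)
    (hf : ∀ i j : Fin k, p + q * ξ i * ξ j - ξ i ≠ 0) :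
    ∏ ij ∈ Finset.univ.offDiag,
        ((ξ (ij : Fin k × Fin k).2 - ξ ij.1) / (p + q * ξ ij.1 * ξ ij.2 - ξ ij.1))
      = (-1) ^ k * ((p * q) ^ (k * (k - 1) / 2))⁻¹ *
          (∏ i : Fin k, (1 - ξ i) * (q * ξ i - p)) *
          Matrix.det (Matrix.of fun i j : Fin k => 1 / (p + q * ξ i * ξ j - ξ i)) := by
  set a : Fin k → ℂ := fun j => q * ξ j - 1 with ha
  set G : Fin k → Fin k → ℂ := fun i j => a j * ξ i + p with hG
  have hfG : ∀ i j, p + q * ξ i * ξ j - ξ i = G i j := fun i j => by simp only [hG, ha]; ring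
  have hG0 : ∀ i j, G i j ≠ 0 := fun i j => hfG i j ▸ hf i j
  have hab : Pairwise fun i j => a i * p ≠ a j * p := fun i j hij h =>
    hij (hinj (by simpa [ha, left_ne_zero_of_mul hpq0, right_ne_zero_of_mul hpq0] using h))
  have hnum : ∏ i, ∏ j ∈ Ioi i, (ξ j - ξ i) * (a i * p - a j * p) =
      (p * q) ^ (k * (k - 1) / 2) * ∏ i, ∏ j ∈ {i}ᶜ, (ξ j - ξ i) := by
    rw [← prod_prod_Ioi_mul_eq_prod_prod_off_diag, ← Fin.prod_prod_Ioi_const, ← prod_mul_distrib]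
    refine prod_congr rfl fun i _ => ?_
    rw [← prod_mul_distrib]
    exact prod_congr rfl fun j _ => by simp only [ha]; ring
  have hdiag : ∀ i, (1 - ξ i) * (q * ξ i - p) = -G i i := fun i => by
    simp only [hG, ha]; linear_combination ξ i * hpq
  have hcauchy := Matrix.det_cauchy ξ a (fun _ => p) hab hG0
  simp only [hfG, one_div, hdiag, prod_neg]
  rw [prod_univ_offDiag, hcauchy, hnum, Fintype.prod_prod_eq_prod_diag_mul_prod_compl G]
  have hGoff : ∏ i, ∏ j ∈ {i}ᶜ, G i j ≠ 0 :=
    prod_ne_zero_iff.2 fun i _ => prod_ne_zero_iff.2 fun j _ => hG0 i j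
  have hGdiag : ∏ i, G i i ≠ 0 := prod_ne_zero_iff.2 fun i _ => hG0 i i
  simp only [prod_div_distrib, card_univ, Fintype.card_fin]
  field_simp
  rw [pow_right_comm, neg_one_sq, one_pow, mul_one]
end

section
/- With K₀ and 0 < τ < 1 as above, the Fredholm determinant satisfies det(I − λK₀) = ∏_{k=0}^∞ (1 − λτ^k) for all λ with |λ| sufficiently small (and by analytic continuation for all λ). -/
/-!
On the circle the iterated kernels are explicit: by Cauchy's formula, since `ζ ↦ 1 / (η' - τ ζ)`
is holomorphic on the closed disc when `ρ ≤ |η'|`, the kernel of `K₀ⁿ⁺¹` is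
`1 / (η' - τⁿ⁺¹ η)` for `|η| ≤ ρ ≤ |η'|`, so `tr K₀ⁿ⁺¹ = 1 / (1 - τⁿ⁺¹)`. Expanding this
geometrically, the double series `∑ₙ ∑ₖ (λ τᵏ)ⁿ⁺¹ / (n + 1)` converges absolutely, and summing
over `n` first gives `-∑ₖ log (1 - λ τᵏ)`.
-/

open Complex

/-- `K0iter τ ρ n` is the kernel of the (n+1)-st power of the integral operator K₀ on
the circle |η| = ρ with kernel 1/(η' − τη) and contour measure dη/(2πi). -/
noncomputable def K0iter (τ ρ : ℝ) : ℕ → ℂ → ℂ → ℂ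
  | 0 => fun η η' => 1 / (η' - (τ : ℂ) * η)
  | n + 1 => fun η η' =>
      (2 * ↑Real.pi * I)⁻¹ *
        ∮ ζ in C(0, ρ), K0iter τ ρ n η ζ * (1 / (η' - (τ : ℂ) * ζ))

open Metric

lemma one_sub_ne_zero_of_norm_lt_one {R : Type*} [NormedRing R] [NormOneClass R] {x : R}
    (hx : ‖x‖ < 1) : 1 - x ≠ 0 :=
  sub_ne_zero.2 (ne_of_apply_ne norm (by rw [norm_one]; exact hx.ne)).symm

section LogSeries

variable {q z : ℂ}

lemma norm_mul_pow_lt_one (hq : ‖q‖ ≤ 1) (hz : ‖z‖ < 1) (k : ℕ) : ‖z * q ^ k‖ < 1 := by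
  rw [norm_mul, norm_pow]
  exact mul_lt_one_of_nonneg_of_lt_one_left (norm_nonneg _) hz (pow_le_one₀ (norm_nonneg _) hq)

lemma summable_mul_pow_pow_div (hq : ‖q‖ < 1) (hz : ‖z‖ < 1) :
    Summable fun p : ℕ × ℕ => (z * q ^ p.1) ^ (p.2 + 1) / (p.2 + 1) := by
  refine Summable.of_norm_bounded (g := fun p : ℕ × ℕ => ‖q‖ ^ p.1 * ‖z‖ ^ p.2)
    ((summable_geometric_of_lt_one (norm_nonneg _) hq).mul_of_nonneg
      (summable_geometric_of_lt_one (norm_nonneg _) hz) (fun _ => by positivity)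
      (fun _ => by positivity)) fun ⟨k, n⟩ => ?_
  have hn : (1 : ℝ) ≤ ‖(n : ℂ) + 1‖ := by
    rw [← Nat.cast_add_one, norm_natCast]; exact_mod_cast Nat.le_add_left 1 n
  calc ‖(z * q ^ k) ^ (n + 1) / (n + 1)‖
      ≤ ‖z * q ^ k‖ ^ n * ‖q ^ k‖ * ‖z‖ := by
        rw [norm_div, norm_pow, pow_succ, norm_mul, ← mul_assoc, mul_right_comm]
        exact div_le_self (by positivity) hn
    _ ≤ ‖z‖ ^ n * ‖q‖ ^ k * 1 := by
        gcongr
        · rw [norm_mul]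
          refine mul_le_of_le_one_right (norm_nonneg _) ?_
          rw [norm_pow]; exact pow_le_one₀ (norm_nonneg _) hq.le
        · exact norm_pow_le _ _
    _ = ‖q‖ ^ k * ‖z‖ ^ n := by ring

theorem tsum_log_one_sub_mul_pow (hq : ‖q‖ < 1) (hz : ‖z‖ < 1) :
    ∑' k : ℕ, log (1 - z * q ^ k) = -∑' n : ℕ, z ^ (n + 1) / (n + 1) * (1 - q ^ (n + 1))⁻¹ := by
  have geometric (n : ℕ) : z ^ (n + 1) / (n + 1) * (1 - q ^ (n + 1))⁻¹
      = ∑' k : ℕ, (z * q ^ k) ^ (n + 1) / (n + 1) := by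
    have hqn : ‖q ^ (n + 1)‖ < 1 := by
      rw [norm_pow]; exact pow_lt_one₀ (norm_nonneg _) hq n.succ_ne_zero
    rw [← tsum_geometric_of_norm_lt_one hqn, ← tsum_mul_left]
    congr 1 with k
    rw [mul_pow, ← pow_mul, ← pow_mul, mul_comm k]
    ring
  rw [tsum_congr geometric, (summable_mul_pow_pow_div hq hz).tsum_comm
      (f := fun (k n : ℕ) => (z * q ^ k) ^ (n + 1) / ((n : ℂ) + 1)),
    ← tsum_neg]
  refine tsum_congr fun k => ?_
  rw [(hasSum_taylorSeries_neg_log' (norm_mul_pow_lt_one hq.le hz k)).tsum_eq, neg_neg]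

end LogSeries

lemma two_pi_I_inv_mul_circleIntegral_one_div_mul_one_div {ρ : ℝ} {a b c : ℂ} (ha : ‖a‖ < ρ)
    (hb : ‖c‖ * ρ < ‖b‖) :
    (2 * ↑Real.pi * I)⁻¹ * (∮ ζ in C(0, ρ), 1 / (ζ - a) * (1 / (b - c * ζ))) = 1 / (b - c * a) := by
  have hne : ∀ ζ ∈ closedBall (0 : ℂ) ρ, b - c * ζ ≠ 0 := fun ζ hζ h => by
    have : ‖c * ζ‖ < ‖b‖ := by
      rw [norm_mul]
      exact (mul_le_mul_of_nonneg_left (mem_closedBall_zero_iff.1 hζ) (norm_nonneg c)).trans_lt hb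
    rw [← sub_eq_zero.1 h] at this
    exact this.false
  have cauchy := DifferentiableOn.circleIntegral_sub_inv_smul (f := fun ζ => (b - c * ζ)⁻¹)
    (DifferentiableOn.inv (by fun_prop) hne) (mem_ball_zero_iff.2 ha)
  simp only [smul_eq_mul, one_div] at cauchy ⊢
  rw [cauchy, ← mul_assoc, inv_mul_cancel₀ two_pi_I_ne_zero, one_mul]

theorem K0iter_eq_one_div {τ ρ : ℝ} (hτ : |τ| < 1) (hρ : 0 < ρ) (n : ℕ) {η η' : ℂ}
    (hη : ‖η‖ ≤ ρ) (hη' : ρ ≤ ‖η'‖) : K0iter τ ρ n η η' = 1 / (η' - (τ : ℂ) ^ (n + 1) * η) := by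
  have hτ' : ‖(τ : ℂ)‖ < 1 := by rwa [norm_real, Real.norm_eq_abs]
  induction n generalizing η' with
  | zero => simp [K0iter]
  | succ n ih =>
    have ha : ‖(τ : ℂ) ^ (n + 1) * η‖ < ρ := by
      rw [norm_mul, norm_pow]
      exact (mul_le_mul_of_nonneg_left hη (by positivity)).trans_lt
        (mul_lt_of_lt_one_left hρ (pow_lt_one₀ (norm_nonneg _) hτ' n.succ_ne_zero))
    have hb : ‖(τ : ℂ)‖ * ρ < ‖η'‖ := (mul_lt_of_lt_one_left hρ hτ').trans_le hη'
    show (2 * ↑Real.pi * I)⁻¹ * (∮ ζ in C(0, ρ), K0iter τ ρ n η ζ * (1 / (η' - τ * ζ))) = _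
    rw [circleIntegral.integral_congr hρ.le fun ζ hζ => by
        rw [ih (mem_sphere_zero_iff_norm.1 hζ).ge],
      two_pi_I_inv_mul_circleIntegral_one_div_mul_one_div ha hb, ← mul_assoc, ← pow_succ']

theorem two_pi_I_inv_mul_circleIntegral_K0iter_diag {τ ρ : ℝ} (hτ : |τ| < 1) (hρ : 0 < ρ)
    (n : ℕ) :
    (2 * ↑Real.pi * I)⁻¹ * (∮ η in C(0, ρ), K0iter τ ρ n η η) = (1 - (τ : ℂ) ^ (n + 1))⁻¹ := by
  have hτn : (1 : ℂ) - (τ : ℂ) ^ (n + 1) ≠ 0 := by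
    refine one_sub_ne_zero_of_norm_lt_one ?_
    rw [norm_pow, norm_real, Real.norm_eq_abs]
    exact pow_lt_one₀ (abs_nonneg τ) hτ n.succ_ne_zero
  have diag : Set.EqOn (fun η => K0iter τ ρ n η η)
      (fun η => (1 - (τ : ℂ) ^ (n + 1))⁻¹ * (η - 0)⁻¹) (sphere 0 ρ) := fun η hη => by
    have hη := mem_sphere_zero_iff_norm.1 hη
    dsimp only
    rw [K0iter_eq_one_div hτ hρ n hη.le hη.ge, sub_zero, ← one_sub_mul, one_div, mul_inv]
  rw [circleIntegral.integral_congr hρ.le diag, circleIntegral.integral_const_mul,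
    circleIntegral.integral_sub_inv_of_mem_ball (mem_ball_self hρ)]
  field_simp

/-- The Fredholm determinant det(I − λK₀), computed through
log det(I − λK₀) = −∑_{n≥1} (λⁿ/n) tr K₀ⁿ, equals ∏_{k=0}^∞ (1 − λτ^k). -/
theorem fredholm_det_K0 (τ ρ : ℝ) (hτ0 : 0 < τ) (hτ1 : τ < 1) (hρ : 0 < ρ)
    (lam : ℂ) (hlam : ‖lam‖ < 1) :
    Complex.exp (-(∑' n : ℕ, lam ^ (n + 1) / ((n : ℂ) + 1) *
        ((2 * ↑Real.pi * I)⁻¹ * ∮ η in C(0, ρ), K0iter τ ρ n η η)))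
      = ∏' k : ℕ, (1 - lam * (τ : ℂ) ^ k) := by
  have hτ : |τ| < 1 := abs_lt.2 ⟨by linarith, hτ1⟩
  have hτ' : ‖(τ : ℂ)‖ < 1 := by rwa [norm_real, Real.norm_eq_abs]
  simp only [two_pi_I_inv_mul_circleIntegral_K0iter_diag hτ hρ]
  rw [← tsum_log_one_sub_mul_pow hτ' hlam]
  refine cexp_tsum_eq_tprod (fun k => one_sub_ne_zero_of_norm_lt_one
    (norm_mul_pow_lt_one hτ'.le hlam k)) ?_
  simpa only [sub_eq_add_neg] using Complex.summable_log_one_add_of_summable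
      ((summable_geometric_of_norm_lt_one hτ').mul_left lam).neg
end

section
/- Let p + q = 1 and f(ξ,ξ') = p + qξξ' − ξ. The two-particle boundary-condition system: for each σ ∈ S_N and each i ∈ {1,…,N−1}, F_σ f(ξ_{σ(i+1)}, ξ_{σ(i)}) + F_{T_iσ} f(ξ_{σ(i)}, ξ_{σ(i+1)}) = 0 (where T_iσ interchanges the i-th and (i+1)-st entries of σ), is solved by F_σ(ξ) = sgn(σ) ∏_{i<j} f(ξ_{σ(i)}, ξ_{σ(j)}) · φ(ξ) for any symmetric function φ. -/
/-! An adjacent transposition `swap a b` (with `a ⋖ b`) reverses the pair `(a, b)` and preserves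
the order of every other pair `i < j`. Hence in the product over `i < j` of
`f(ξ_{σ(i)}, ξ_{σ(j)})` passing from `σ` to `σ * swap a b` only turns the factor `f(ξ_{σ a}, ξ_{σ b})`
into `f(ξ_{σ b}, ξ_{σ a})`, while the sign flips. -/

variable {α : Type*} [LinearOrder α] {a b : α}

theorem Equiv.swap_lt_swap_of_covBy (hab : a ⋖ b) {i j : α} (hij : i < j)
    (hne : ¬(i = a ∧ j = b)) : swap a b i < swap a b j := by
  have := hab.lt
  have := @hab.le_of_lt
  have := @hab.ge_of_gt
  rw [swap_apply_def, swap_apply_def]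
  split_ifs <;> subst_vars <;> grind

namespace Finset

variable {M : Type*} [CommMonoid M] [Fintype α] [LocallyFiniteOrderTop α]

theorem prod_prod_Ioi_comp_swap_mul_of_covBy (hab : a ⋖ b) (f : α → α → M) :
    (∏ i, ∏ j ∈ Ioi i, f (Equiv.swap a b i) (Equiv.swap a b j)) * f a b =
      (∏ i, ∏ j ∈ Ioi i, f i j) * f b a := by
  set τ := Equiv.swap a b
  set P := (univ.sigma fun i : α => Ioi i).erase ⟨a, b⟩
  have hmem : (⟨a, b⟩ : Σ _ : α, α) ∈ univ.sigma fun i => Ioi i := by simpa using hab.lt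
  have hmaps : ∀ x ∈ P, (⟨τ x.1, τ x.2⟩ : Σ _ : α, α) ∈ P := by
    rintro ⟨i, j⟩ hx
    simp only [P, mem_erase, mem_sigma, mem_univ, mem_Ioi, true_and, ne_eq, Sigma.mk.injEq,
      heq_eq_eq] at hx ⊢
    refine ⟨fun ⟨hi, hj⟩ => ?_, Equiv.swap_lt_swap_of_covBy hab hx.2 hx.1⟩
    rw [Equiv.swap_apply_eq_iff, Equiv.swap_apply_left] at hi
    rw [Equiv.swap_apply_eq_iff, Equiv.swap_apply_right] at hj
    exact hab.lt.not_gt (hi ▸ hj ▸ hx.2)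
  have hP : ∏ x ∈ P, f (τ x.1) (τ x.2) = ∏ x ∈ P, f x.1 x.2 :=
    prod_nbij' (fun x => ⟨τ x.1, τ x.2⟩) (fun x => ⟨τ x.1, τ x.2⟩) hmaps hmaps
      (by simp [τ]) (by simp [τ]) (by simp)
  rw [prod_sigma', prod_sigma', ← mul_prod_erase _ _ hmem, ← mul_prod_erase _ _ hmem, hP]
  simp only [τ, Equiv.swap_apply_left, Equiv.swap_apply_right]
  ac_rfl

end Finset

theorem bethe_boundary_conditions_general (N : ℕ) (p q : ℂ)
    (ξ : Fin N → ℂ) (φ : (Fin N → ℂ) → ℂ)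
    (F : Equiv.Perm (Fin N) → ℂ)
    (hF : ∀ σ : Equiv.Perm (Fin N), F σ =
      ((Equiv.Perm.sign σ : ℤ) : ℂ) *
        (∏ i : Fin N, ∏ j ∈ Finset.Ioi i,
          (p + q * ξ (σ i) * ξ (σ j) - ξ (σ i))) * φ ξ)
    (σ : Equiv.Perm (Fin N)) (a b : Fin N) (hab : (a : ℕ) + 1 = (b : ℕ)) :
    F σ * (p + q * ξ (σ b) * ξ (σ a) - ξ (σ b)) +
        F (σ * Equiv.swap a b) * (p + q * ξ (σ a) * ξ (σ b) - ξ (σ a)) = 0 := by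
  have hcov : a ⋖ b := Fin.covBy_iff.2 (Nat.covBy_iff_add_one_eq.2 hab)
  have hsign : ((Equiv.Perm.sign (σ * Equiv.swap a b) : ℤ) : ℂ) = -(Equiv.Perm.sign σ : ℤ) := by
    simp [Equiv.Perm.sign_mul, Equiv.Perm.sign_swap hcov.lt.ne]
  have hprod := Finset.prod_prod_Ioi_comp_swap_mul_of_covBy hcov
    fun i j => p + q * ξ (σ i) * ξ (σ j) - ξ (σ i)
  rw [hF, hF, hsign]
  simp only [Equiv.Perm.mul_apply]
  linear_combination (-(Equiv.Perm.sign σ : ℤ) * φ ξ : ℂ) * hprod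

/-- The Bethe Ansatz coefficients F_σ = sgn(σ) ∏_{i<j} f(ξ_{σ(i)},ξ_{σ(j)}) · φ(ξ)
solve the boundary-condition system
F_σ f(ξ_{σ(i+1)},ξ_{σ(i)}) + F_{T_iσ} f(ξ_{σ(i)},ξ_{σ(i+1)}) = 0,
where f(ξ,ξ') = p + qξξ' − ξ, T_iσ interchanges the i-th and (i+1)-st entries of σ,
and φ is any symmetric function. -/
theorem bethe_boundary_conditions (N : ℕ) (p q : ℂ) (hpq : p + q = 1)
    (ξ : Fin N → ℂ) (φ : (Fin N → ℂ) → ℂ)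
    (hφ : ∀ σ : Equiv.Perm (Fin N), φ (ξ ∘ σ) = φ ξ)
    (F : Equiv.Perm (Fin N) → ℂ)
    (hF : ∀ σ : Equiv.Perm (Fin N), F σ =
      ((Equiv.Perm.sign σ : ℤ) : ℂ) *
        (∏ i : Fin N, ∏ j ∈ Finset.Ioi i,
          (p + q * ξ (σ i) * ξ (σ j) - ξ (σ i))) * φ ξ)
    (σ : Equiv.Perm (Fin N)) (a b : Fin N) (hab : (a : ℕ) + 1 = (b : ℕ)) :
    F σ * (p + q * ξ (σ b) * ξ (σ a) - ξ (σ b)) +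
        F (σ * Equiv.swap a b) * (p + q * ξ (σ a) * ξ (σ b) - ξ (σ a)) = 0 :=
  bethe_boundary_conditions_general N p q ξ φ F hF σ a b hab
end

section
/- Suppose a function G(ξ₁,…,ξ_n), symmetric in its variables, is a rational function bounded as each ξ_i → ∞ (with the others fixed), and such that the product G · ∏_{i<j}(ξ_i − ξ_j) is a polynomial. Then G is itself a polynomial; combined with the boundedness, G of degree at most 0 in each variable, it is constant if bounded in all variables simultaneously. -/
/-!
Since `G` is defined everywhere, `G · V` vanishes on each diagonal `ξ i = ξ j`, so every
`X i - X j` divides `P`. These are pairwise non-associated primes, hence the Vandermonde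
product `V` divides `P`, say `P = V * Q`. Then `G = Q` off the zero set of `V`, whose
complement is dense, so `G = Q` everywhere by continuity; a bounded polynomial is constant by
Liouville's theorem.
-/

open Finset MvPolynomial

namespace MvPolynomial

variable {R σ : Type*} [CommRing R]

theorem dvd_aeval_sub_aeval {S : Type*} [CommRing S] [Algebra R S] {a : S} {x y : σ → S}
    (h : ∀ k, a ∣ x k - y k) (p : MvPolynomial σ R) : a ∣ aeval x p - aeval y p := by
  let π := Ideal.Quotient.mkₐ R (Ideal.span {a})
  have hxy : (fun k => π (x k)) = fun k => π (y k) :=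
    _root_.funext fun k => Ideal.Quotient.eq.2 (Ideal.mem_span_singleton.2 (h k))
  rw [← Ideal.mem_span_singleton, ← Ideal.Quotient.eq, ← Ideal.Quotient.mkₐ_eq_mk R,
    comp_aeval_apply, comp_aeval_apply, hxy]

theorem X_sub_X_dvd_sub_rename_update [DecidableEq σ] (i j : σ) (p : MvPolynomial σ R) :
    X i - X j ∣ p - rename (Function.update id i j) p := by
  have h : ∀ k, (X i - X j : MvPolynomial σ R) ∣ X k - (X ∘ Function.update id i j) k := by
    intro k
    by_cases hk : k = i
    · subst hk; simp
    · simp [hk]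
  simpa only [aeval_X_left_apply, ← rename_eq_aeval] using dvd_aeval_sub_aeval h p

theorem X_sub_X_prime [IsDomain R] {i j : σ} (hij : i ≠ j) :
    Prime (X i - X j : MvPolynomial σ R) := by
  classical
  have hne : (X i - X j : MvPolynomial σ R) ≠ 0 := sub_ne_zero.2 (X_injective.ne hij)
  have hker :
      RingHom.ker (rename (R := R) (Function.update id i j)) = Ideal.span {X i - X j} := by
    refine le_antisymm (fun p hp => ?_) ?_
    · simpa [RingHom.mem_ker.1 hp, Ideal.mem_span_singleton] using
        X_sub_X_dvd_sub_rename_update i j p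
    · simp [Ideal.span_le, Function.update_of_ne hij.symm]
  exact (Ideal.span_singleton_prime hne).1 (hker ▸ RingHom.ker_isPrime _)

theorem X_sub_X_dvd_iff [IsDomain R] [Infinite R] {i j : σ} {p : MvPolynomial σ R} :
    X i - X j ∣ p ↔ ∀ ξ : σ → R, ξ i = ξ j → eval ξ p = 0 := by
  classical
  refine ⟨fun ⟨q, hq⟩ ξ hξ => by simp [hq, hξ], fun h => ?_⟩
  have hren : rename (Function.update id i j) p = 0 := MvPolynomial.funext fun ξ => by
    rw [eval_rename, map_zero]
    exact h _ (by by_cases hij : j = i <;> simp [hij])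
  simpa [hren] using X_sub_X_dvd_sub_rename_update i j p

section Vandermonde

variable [LinearOrder σ]

theorem eq_of_X_sub_X_dvd_X_sub_X [Nontrivial R] {i j k l : σ} (hij : i < j) (hkl : k < l)
    (h : (X i - X j : MvPolynomial σ R) ∣ X k - X l) : i = k ∧ j = l := by
  have hren := map_dvd (rename (R := R) (Function.update id j i)) h
  simp only [map_sub, rename_X, Function.update_self, Function.update_of_ne hij.ne, id, sub_self,
    zero_dvd_iff, sub_eq_zero, X_injective.eq_iff, Function.update_apply] at hren
  split_ifs at hren <;> exact ⟨by order, by order⟩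

variable [Fintype σ] [LocallyFiniteOrderTop σ]

theorem prod_X_sub_X_dvd [IsDomain R] [UniqueFactorizationMonoid R] {P : MvPolynomial σ R}
    (h : ∀ i j, i < j → X i - X j ∣ P) : (∏ i, ∏ j ∈ Ioi i, (X i - X j)) ∣ P := by
  rw [prod_sigma' univ Ioi fun i j => (X i - X j : MvPolynomial σ R)]
  have hlt : ∀ c ∈ univ.sigma fun i : σ => Ioi i, c.1 < c.2 :=
    fun c hc => mem_Ioi.1 (mem_sigma.1 hc).2
  refine prod_dvd_of_isRelPrime (fun a ha b hb hab => ?_) fun a ha => h _ _ (hlt a ha)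
  refine (X_sub_X_prime (hlt a ha).ne).irreducible.isRelPrime_iff_not_dvd.2 fun hd => hab ?_
  obtain ⟨h1, h2⟩ := eq_of_X_sub_X_dvd_X_sub_X (hlt a ha) (hlt b hb) hd
  exact Sigma.ext h1 (heq_of_eq h2)

theorem prod_X_sub_X_ne_zero [IsDomain R] :
    (∏ i, ∏ j ∈ Ioi i, (X i - X j : MvPolynomial σ R)) ≠ 0 :=
  prod_ne_zero_iff.2 fun _ _ => prod_ne_zero_iff.2 fun _ hj =>
    (X_sub_X_prime (mem_Ioi.1 hj).ne).ne_zero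

end Vandermonde

section Topology

variable {𝕜 : Type*} [NontriviallyNormedField 𝕜]

theorem dense_setOf_eval_ne_zero {p : MvPolynomial σ 𝕜} (hp : p ≠ 0) :
    Dense {ξ : σ → 𝕜 | eval ξ p ≠ 0} := by
  obtain ⟨η, hη⟩ : ∃ η, eval η p ≠ 0 := by
    by_contra! h
    exact hp (MvPolynomial.funext fun ξ => by simp [h])
  intro ξ
  -- On the line through `ξ` and `η`, `p` restricts to a nonzero polynomial `q` in one variable.
  let line : 𝕜 → σ → 𝕜 := fun t m => ξ m + t * (η m - ξ m)
  let q : Polynomial 𝕜 :=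
    aeval (fun m => Polynomial.C (ξ m) + Polynomial.X * Polynomial.C (η m - ξ m)) p
  have hq : ∀ t, q.eval t = eval (line t) p := fun t => by
    rw [← Polynomial.coe_aeval_eq_eval, comp_aeval_apply, ← coe_aeval_eq_eval]
    simp [line]
  have hq0 : q ≠ 0 := fun h => hη (by simpa [line, h] using (hq 1).symm)
  have hdense : Dense {t | q.eval t ≠ 0} := by
    simpa [Set.sdiff_eq, Set.compl_ofPred] using
      dense_univ.sdiff_finite (Polynomial.finite_setOfPred_isRoot hq0)
  have hline : Continuous line := by fun_prop
  have h0 : line 0 = ξ := by simp [line]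
  refine closure_mono ?_ (hline.range_subset_closure_image_dense hdense ⟨0, h0⟩)
  rintro _ ⟨t, ht, rfl⟩
  simpa [← hq] using ht

theorem eval_eq_of_continuous_of_mul_eval_eq {G : (σ → 𝕜) → 𝕜} (hG : Continuous G)
    {V Q : MvPolynomial σ 𝕜} (hV : V ≠ 0) (h : ∀ ξ, G ξ * eval ξ V = eval ξ (V * Q)) (ξ : σ → 𝕜) :
    G ξ = eval ξ Q := by
  refine congrFun (hG.ext_on (dense_setOf_eval_ne_zero hV) (continuous_eval Q) fun ξ hξ => ?_) ξ
  exact mul_right_cancel₀ hξ (by rw [h, map_mul, mul_comm])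

end Topology

end MvPolynomial

theorem symmetric_vandermonde_argument_general (n : ℕ) (G : (Fin n → ℂ) → ℂ)
    (hcont : Continuous G)
    (hpoly : ∃ P : MvPolynomial (Fin n) ℂ, ∀ ξ : Fin n → ℂ,
      G ξ * ∏ i : Fin n, ∏ j ∈ Finset.Ioi i, (ξ i - ξ j) = MvPolynomial.eval ξ P) :
    (∃ Q : MvPolynomial (Fin n) ℂ, ∀ ξ : Fin n → ℂ, G ξ = MvPolynomial.eval ξ Q) ∧
      ((∃ C : ℝ, ∀ ξ : Fin n → ℂ, ‖G ξ‖ ≤ C) → ∃ c : ℂ, ∀ ξ, G ξ = c) := by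
  obtain ⟨P, hP⟩ := hpoly
  set V : MvPolynomial (Fin n) ℂ := ∏ i, ∏ j ∈ Ioi i, (X i - X j)
  have hV : ∀ ξ, eval ξ V = ∏ i, ∏ j ∈ Ioi i, (ξ i - ξ j) := by simp [V]
  obtain ⟨Q, rfl⟩ : V ∣ P := prod_X_sub_X_dvd fun i j hij => X_sub_X_dvd_iff.2 fun ξ hξ => by
    rw [← hP, prod_eq_zero (mem_univ i) (prod_eq_zero (mem_Ioi.2 hij) (sub_eq_zero.2 hξ)),
      mul_zero]
  have hGQ : ∀ ξ, G ξ = eval ξ Q :=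
    eval_eq_of_continuous_of_mul_eval_eq hcont prod_X_sub_X_ne_zero fun ξ => by rw [hV, hP]
  refine ⟨⟨Q, hGQ⟩, fun ⟨C, hC⟩ => ?_⟩
  have hdiff : Differentiable ℂ G := by
    rw [show G = (eval · Q) from funext hGQ]
    exact differentiableOn_univ.1 (AnalyticOnNhd.eval_mvPolynomial Q).differentiableOn
  exact hdiff.exists_const_forall_eq_of_bounded
    (isBounded_iff_forall_norm_le.2 ⟨C, by simpa using hC⟩)

/-- The symmetrization/Vandermonde argument: a symmetric (continuous) rational function
G, bounded as each variable tends to ∞ with the others fixed, such that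
G · ∏_{i<j}(ξ_i − ξ_j) is a polynomial, is itself a polynomial; and if it is bounded in
all variables simultaneously it is constant. -/
theorem symmetric_vandermonde_argument (n : ℕ) (G : (Fin n → ℂ) → ℂ)
    (hcont : Continuous G)
    (hsym : ∀ (σ : Equiv.Perm (Fin n)) (ξ : Fin n → ℂ), G (ξ ∘ σ) = G ξ)
    (hpoly : ∃ P : MvPolynomial (Fin n) ℂ, ∀ ξ : Fin n → ℂ,
      G ξ * ∏ i : Fin n, ∏ j ∈ Finset.Ioi i, (ξ i - ξ j) = MvPolynomial.eval ξ P)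
    (hbdd : ∀ (ξ : Fin n → ℂ) (i : Fin n), ∃ C : ℝ, ∀ z : ℂ,
      ‖G (Function.update ξ i z)‖ ≤ C) :
    (∃ Q : MvPolynomial (Fin n) ℂ, ∀ ξ : Fin n → ℂ, G ξ = MvPolynomial.eval ξ Q) ∧
      ((∃ C : ℝ, ∀ ξ : Fin n → ℂ, ‖G ξ‖ ≤ C) → ∃ c : ℂ, ∀ ξ, G ξ = c) :=
  symmetric_vandermonde_argument_general n G hcont hpoly
end
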